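/- arXiv:2207.13609 — 4 statements merged into one kernel-verified Lean document; each statement's English description precedes it below -/
import Mathlib

section
/- Let ρ ∈ (0,1) and s > 0. Then ∫_1^∞ e^{-s·y} · y^{-1} · (y-1)^{-ρ} dy = Γ(1-ρ) · Γ(ρ, s). Consequently, for θ > 0 and η ≥ 0, the Laplace transform of the tempered Γ-grey density satisfies ∫_1^∞ e^{-η y} l^θ_ρ(y) dy = Γ(ρ, θ+η)/Γ(ρ, θ). -/
open MeasureTheory Real Set

/-- Upper incomplete gamma function `Γ(ρ, x) = ∫_x^∞ e^{-w} w^{ρ-1} dw`. -/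
noncomputable def uGamma (ρ x : ℝ) : ℝ := ∫ w in Set.Ioi x, Real.exp (-w) * w ^ (ρ - 1)

/-- The tempered Γ-grey density `l^θ_ρ`. -/
noncomputable def lDens (ρ θ y : ℝ) : ℝ :=
  if 1 < y then Real.exp (-θ * y) / (uGamma ρ θ * Real.Gamma (1 - ρ) * y * (y - 1) ^ ρ) else 0

-- integrability of tail
lemma tail_integrable {ρ s : ℝ} (hρ : 0 < ρ) (hs : 0 ≤ s) :
    IntegrableOn (fun w => Real.exp (-w) * w ^ (ρ - 1)) (Set.Ioi s) :=
  (Real.GammaIntegral_convergent hρ).mono_set (Set.Ioi_subset_Ioi hs)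

lemma uGamma_pos {ρ s : ℝ} (hρ : 0 < ρ) (hs : 0 < s) : 0 < uGamma ρ s := by
  rw [uGamma]
  apply (setIntegral_pos_iff_support_of_nonneg_ae ?_ (tail_integrable hρ hs.le)).2
  · have : (Set.Ioi s) ⊆ Function.support fun w => Real.exp (-w) * w ^ (ρ - 1) := by
      intro w hw
      have hw' : 0 < w := hs.trans hw
      simp [Function.mem_support]
      positivity
    calc (0:ENNReal) < volume (Set.Ioi s) := by simp
      _ ≤ _ := measure_mono (Set.subset_inter this (subset_refl _))
  · filter_upwards [ae_restrict_mem measurableSet_Ioi] with w hw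
    have hw' : 0 < w := hs.trans hw
    positivity

lemma shift_pre : (fun x : ℝ => x + 1) ⁻¹' (Set.Ioi 1) = Set.Ioi 0 := by
  ext x; simp

lemma inner_y_val {ρ w : ℝ} (hρ : ρ ∈ Set.Ioo (0:ℝ) 1) (hw : 0 < w) :
    ∫ y in Set.Ioi (1:ℝ), Real.exp (-(w*y)) * (y-1) ^ (-ρ)
      = Real.Gamma (1-ρ) * (Real.exp (-w) * w ^ (ρ-1)) := by
  have shift := (measurePreserving_add_right volume (1:ℝ)).setIntegral_preimage_emb
    (measurableEmbedding_addRight 1) (fun y => Real.exp (-(w*y)) * (y-1)^(-ρ)) (Set.Ioi 1)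
  rw [shift_pre] at shift
  rw [← shift]
  have : ∀ x ∈ Set.Ioi (0:ℝ),
      Real.exp (-(w*(x+1))) * ((x+1)-1)^(-ρ)
        = Real.exp (-w) * (x ^ ((1-ρ)-1) * Real.exp (-(w*x))) := by
    intro x _
    rw [show (x+1)-1 = x by ring, show -(w*(x+1)) = -(w*x) + -w by ring, Real.exp_add,
      show (1-ρ)-1 = -ρ by ring]
    ring
  rw [setIntegral_congr_fun measurableSet_Ioi this, integral_const_mul,
    integral_rpow_mul_exp_neg_mul_Ioi (by linarith [hρ.2] : 0 < 1-ρ) hw,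
    one_div, Real.inv_rpow hw.le, ← Real.rpow_neg hw.le, show -(1-ρ) = ρ-1 by ring]
  ring

lemma inner_y_int {ρ w : ℝ} (hρ : ρ ∈ Set.Ioo (0:ℝ) 1) (hw : 0 < w) :
    IntegrableOn (fun y => Real.exp (-(w*y)) * (y-1) ^ (-ρ)) (Set.Ioi 1) := by
  rw [← (measurePreserving_add_right volume (1:ℝ)).integrableOn_comp_preimage
    (measurableEmbedding_addRight 1), shift_pre]
  have : IntegrableOn (fun x : ℝ => Real.exp (-w) * (x ^ ((1-ρ)-1) * Real.exp (-(w*x))))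
      (Set.Ioi 0) := by
    apply Integrable.const_mul
    have hbase : IntegrableOn (fun x : ℝ => Real.exp (-(w*x)) * (w*x) ^ ((1-ρ)-1))
        (Set.Ioi 0) := by
      have h := (integrableOn_Ioi_comp_mul_left_iff
        (fun t => Real.exp (-t) * t ^ ((1-ρ)-1)) 0 hw).2
        ((Real.GammaIntegral_convergent (s := 1-ρ) (by linarith [hρ.2])).mono_set
          (by simp))
      simpa using h
    exact IntegrableOn.congr_fun (hbase.const_mul (w ^ ρ)) (fun x hx => by
      have hx0 : (0:ℝ) < x := hx
      have hwρ : w ^ ρ ≠ 0 := (Real.rpow_pos_of_pos hw ρ).ne'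
      rw [Real.mul_rpow hw.le hx0.le, show (1-ρ)-1 = -ρ by ring, Real.rpow_neg hw.le]
      field_simp) measurableSet_Ioi
  exact IntegrableOn.congr_fun this (fun x hx => by
    simp only [Function.comp]
    rw [show (x+1)-1 = x by ring, show -(w*(x+1)) = -(w*x) + -w by ring, Real.exp_add,
      show (1-ρ)-1 = -ρ by ring]
    ring) measurableSet_Ioi

lemma stepA {ρ s : ℝ} (hs : 0 < s) {y : ℝ} (hy : (1:ℝ) < y) :
    ∫ w in Set.Ioi s, Real.exp (-(w*y)) * (y-1) ^ (-ρ)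
      = Real.exp (-s * y) * y⁻¹ * (y-1) ^ (-ρ) := by
  have hy0 : (0:ℝ) < y := one_pos.trans hy
  rw [integral_mul_const]
  have := integral_comp_mul_right_Ioi (fun t => Real.exp (-t)) s hy0
  simp only [smul_eq_mul] at this
  rw [this, integral_exp_neg_Ioi]
  rw [show -s*y = -(s*y) by ring]
  ring


lemma lhs_integrable {ρ : ℝ} (hρ : ρ ∈ Set.Ioo (0:ℝ) 1) {s : ℝ} (hs : 0 < s) :
    IntegrableOn (fun y => Real.exp (-s * y) * y⁻¹ * (y-1)^(-ρ)) (Set.Ioi (1:ℝ)) := by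
  apply (inner_y_int hρ hs).mono'
  · apply Measurable.aestronglyMeasurable
    fun_prop
  · filter_upwards [ae_restrict_mem measurableSet_Ioi] with y hy
    have hy0 : (0:ℝ) < y := one_pos.trans hy
    have h1 : (0:ℝ) ≤ (y-1)^(-ρ) := Real.rpow_nonneg (by linarith [show (1:ℝ) < y from hy]) _
    have h2 : (0:ℝ) ≤ y⁻¹ := by positivity
    rw [Real.norm_eq_abs, abs_of_nonneg (by positivity), show -s*y = -(s*y) by ring]
    have h3 : y⁻¹ ≤ 1 := by rw [inv_le_one_iff₀]; right; linarith [show (1:ℝ) < y from hy]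
    have he : (0:ℝ) ≤ Real.exp (-(s*y)) := (Real.exp_pos _).le
    have h4 : Real.exp (-(s*y)) * y⁻¹ ≤ Real.exp (-(s*y)) := by nlinarith
    exact mul_le_mul_of_nonneg_right h4 h1

set_option maxHeartbeats 1000000 in
lemma key {ρ : ℝ} (hρ : ρ ∈ Set.Ioo (0:ℝ) 1) {s : ℝ} (hs : 0 < s) :
    ∫ y in Set.Ioi (1:ℝ), Real.exp (-s * y) * y⁻¹ * (y - 1) ^ (-ρ)
      = Real.Gamma (1 - ρ) * uGamma ρ s := by
  have hmeas : AEStronglyMeasurable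
      (Function.uncurry fun y w => Real.exp (-(w*y)) * (y-1)^(-ρ))
      ((volume.restrict (Set.Ioi (1:ℝ))).prod (volume.restrict (Set.Ioi s))) := by
    apply Measurable.aestronglyMeasurable
    fun_prop
  have hInt : Integrable (Function.uncurry fun y w => Real.exp (-(w*y)) * (y-1)^(-ρ))
      ((volume.restrict (Set.Ioi (1:ℝ))).prod (volume.restrict (Set.Ioi s))) := by
    rw [integrable_prod_iff hmeas]
    constructor
    · filter_upwards [ae_restrict_mem measurableSet_Ioi] with y hy
      have hy0 : (0:ℝ) < y := one_pos.trans hy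
      refine IntegrableOn.congr_fun ((exp_neg_integrableOn_Ioi s hy0).mul_const
        ((y-1)^(-ρ))) (fun w _ => ?_) measurableSet_Ioi
      simp only [Function.uncurry]
      rw [show -y*w = -(w*y) by ring]
    · apply (lhs_integrable hρ hs).congr_fun_ae
      filter_upwards [ae_restrict_mem measurableSet_Ioi] with y hy
      rw [← stepA hs hy]
      apply setIntegral_congr_fun measurableSet_Ioi
      intro w _
      simp only [Function.uncurry]
      rw [Real.norm_eq_abs, abs_of_nonneg]
      have : (0:ℝ) ≤ (y-1)^(-ρ) :=
        Real.rpow_nonneg (by linarith [show (1:ℝ) < y from hy]) _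
      positivity
  calc ∫ y in Set.Ioi (1:ℝ), Real.exp (-s * y) * y⁻¹ * (y - 1) ^ (-ρ)
      = ∫ y in Set.Ioi (1:ℝ), ∫ w in Set.Ioi s, Real.exp (-(w*y)) * (y-1)^(-ρ) := by
        apply setIntegral_congr_fun measurableSet_Ioi
        intro y hy
        exact (stepA hs hy).symm
    _ = ∫ w in Set.Ioi s, ∫ y in Set.Ioi (1:ℝ), Real.exp (-(w*y)) * (y-1)^(-ρ) :=
        integral_integral_swap hInt
    _ = ∫ w in Set.Ioi s, Real.Gamma (1-ρ) * (Real.exp (-w) * w ^ (ρ-1)) := by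
        apply setIntegral_congr_fun measurableSet_Ioi
        intro w hw
        exact inner_y_val hρ (hs.trans hw)
    _ = Real.Gamma (1 - ρ) * uGamma ρ s := by rw [integral_const_mul]; rfl

theorem stmt_0 (ρ : ℝ) (hρ : ρ ∈ Set.Ioo (0 : ℝ) 1) :
    (∀ s > (0 : ℝ), ∫ y in Set.Ioi (1 : ℝ), Real.exp (-s * y) * y⁻¹ * (y - 1) ^ (-ρ)
        = Real.Gamma (1 - ρ) * uGamma ρ s) ∧
    (∀ θ > (0 : ℝ), ∀ η ≥ (0 : ℝ), ∫ y in Set.Ioi (1 : ℝ), Real.exp (-η * y) * lDens ρ θ y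
        = uGamma ρ (θ + η) / uGamma ρ θ) := by
  refine ⟨fun s hs => key hρ hs, fun θ hθ η hη => ?_⟩
  have hΓ : Real.Gamma (1 - ρ) ≠ 0 := (Real.Gamma_pos_of_pos (by linarith [hρ.2])).ne'
  have huθ : uGamma ρ θ ≠ 0 := (uGamma_pos hρ.1 hθ).ne'
  have hcongr : ∀ y ∈ Set.Ioi (1:ℝ), Real.exp (-η * y) * lDens ρ θ y
      = (uGamma ρ θ * Real.Gamma (1 - ρ))⁻¹
        * (Real.exp (-(θ+η) * y) * y⁻¹ * (y - 1) ^ (-ρ)) := by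
    intro y hy
    have hy1 : (1:ℝ) < y := hy
    rw [lDens, if_pos hy1, Real.rpow_neg (by linarith : (0:ℝ) ≤ y - 1),
      show -(θ+η) * y = -η * y + -θ * y by ring, Real.exp_add]
    field_simp
  rw [setIntegral_congr_fun measurableSet_Ioi hcongr, integral_const_mul,
    key hρ (by linarith : (0:ℝ) < θ + η)]
  field_simp
end

section
/- Let ρ ∈ (0,1], θ > 0 and n ≥ 1 an integer. Then θ^{ρ-n} · E^ρ_{1,ρ+1-n}(-θ) = (1/Γ(ρ)) · (d^{n-1}/dθ^{n-1})(θ^{ρ-1} e^{-θ}) = -(1/Γ(ρ)) · (d^n/dθ^n) Γ(ρ, θ), where the derivatives are iterated derivatives of the functions x ↦ x^{ρ-1}e^{-x} and x ↦ Γ(ρ,x) evaluated at θ. -/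
open MeasureTheory Real Set

/-- Three-parameter (Prabhakar) Mittag-Leffler function `E^γ_{α,β}(z)`.
Since `Real.Gamma` vanishes at non-positive integers, a term of the series vanishes
(by division by zero) when `α j + β` is a non-positive integer, matching the convention. -/
noncomputable def prabhakar (α β γ z : ℝ) : ℝ :=
  ∑' j : ℕ, (Real.Gamma (γ + j) / Real.Gamma γ) * z ^ j
      / ((j.factorial : ℝ) * Real.Gamma (α * j + β))

lemma pow_le_factorial_mul_exp (k : ℕ) {x : ℝ} (hx : 0 ≤ x) :
    x ^ k ≤ (k.factorial : ℝ) * Real.exp x := by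
  have h1 : Real.exp x = ∑' n : ℕ, x ^ n / n.factorial := by
    rw [Real.exp_eq_exp_ℝ, NormedSpace.exp_eq_tsum_div]
  have hs : Summable fun n : ℕ => x ^ n / n.factorial := Real.summable_pow_div_factorial x
  have h2 : x ^ k / k.factorial ≤ Real.exp x := by
    rw [h1]
    exact Summable.le_tsum hs k (fun i _ => by positivity)
  have hk : (0:ℝ) < k.factorial := by positivity
  calc x ^ k = (x ^ k / k.factorial) * k.factorial := by field_simp
  _ ≤ Real.exp x * k.factorial := by gcongr
  _ = _ := by ring

lemma aux_summable (k : ℕ) (b : ℝ) (hb : 0 ≤ b) :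
    Summable fun j : ℕ => ((j : ℝ) + k) ^ k * b ^ j / j.factorial := by
  have key : ∀ j : ℕ, ((j : ℝ) + k) ^ k * b ^ j / j.factorial
      ≤ (k.factorial : ℝ) * Real.exp k * ((Real.exp 1 * b) ^ j / j.factorial) := by
    intro j
    have h1 : ((j : ℝ) + k) ^ k ≤ (k.factorial : ℝ) * Real.exp ((j:ℝ) + k) :=
      pow_le_factorial_mul_exp k (by positivity)
    have h2 : Real.exp ((j:ℝ) + k) = Real.exp 1 ^ j * Real.exp k := by
      rw [Real.exp_add, ← Real.exp_nat_mul]; ring_nf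
    have h3 : ((j : ℝ) + k) ^ k * b ^ j ≤ (k.factorial : ℝ) * Real.exp k * (Real.exp 1 * b) ^ j := by
      rw [mul_pow]
      calc ((j : ℝ) + k) ^ k * b ^ j ≤ ((k.factorial : ℝ) * Real.exp ((j:ℝ)+k)) * b ^ j := by
            gcongr
      _ = (k.factorial : ℝ) * Real.exp k * (Real.exp 1 ^ j * b ^ j) := by rw [h2]; ring
    have hj : (0:ℝ) < j.factorial := by positivity
    rw [div_le_iff₀ hj]
    calc (↑j + ↑k:ℝ) ^ k * b ^ j ≤ ↑k.factorial * rexp ↑k * (rexp 1 * b) ^ j := h3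
    _ = ↑k.factorial * rexp ↑k * ((rexp 1 * b) ^ j / ↑j.factorial) * ↑j.factorial := by
        field_simp
  refine Summable.of_nonneg_of_le (fun j => by positivity) key ?_
  exact ((Real.summable_pow_div_factorial (Real.exp 1 * b)).mul_left _)

noncomputable def sTerm (ρ : ℝ) (m j : ℕ) (x : ℝ) : ℝ :=
  (∏ l ∈ Finset.range m, (ρ - 1 + j - l)) * (-1)^j / j.factorial * x ^ (ρ - 1 + j - m)

noncomputable def sFun (ρ : ℝ) (m : ℕ) (x : ℝ) : ℝ := ∑' j, sTerm ρ m j x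

lemma sTerm_hasDerivAt (ρ : ℝ) (m j : ℕ) {x : ℝ} (hx : x ≠ 0) :
    HasDerivAt (sTerm ρ m j) (sTerm ρ (m+1) j x) x := by
  have h := (Real.hasDerivAt_rpow_const (p := ρ - 1 + j - m) (Or.inl hx)).const_mul
    ((∏ l ∈ Finset.range m, (ρ - 1 + (j:ℝ) - l)) * (-1)^j / j.factorial)
  refine HasDerivAt.congr_deriv (f := sTerm ρ m j) h ?_
  rw [sTerm, Finset.prod_range_succ,
    show ρ - 1 + (j:ℝ) - ((m+1:ℕ):ℝ) = ρ - 1 + (j:ℝ) - (m:ℝ) - 1 by push_cast; ring]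
  ring

lemma sTerm_bound (ρ : ℝ) (hρ : ρ ∈ Set.Ioc (0:ℝ) 1) (m j : ℕ) {a b x : ℝ}
    (ha : 0 < a) (hax : a ≤ x) (hxb : x ≤ b) :
    |sTerm ρ m j x| ≤ (a ^ (ρ - 1 - (m:ℝ)) + b ^ (ρ - 1 - (m:ℝ)))
      * (((j:ℝ) + m) ^ m * b ^ j / j.factorial) := by
  obtain ⟨hρ0, hρ1⟩ := hρ
  have hx : 0 < x := lt_of_lt_of_le ha hax
  have hb : 0 < b := lt_of_lt_of_le hx hxb
  have hprod : |∏ l ∈ Finset.range m, (ρ - 1 + (j:ℝ) - l)| ≤ ((j:ℝ) + m) ^ m := by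
    rw [Finset.abs_prod]
    calc ∏ l ∈ Finset.range m, |ρ - 1 + (j:ℝ) - l|
        ≤ ∏ l ∈ Finset.range m, ((j:ℝ) + m) := by
          apply Finset.prod_le_prod (fun _ _ => abs_nonneg _)
          intro l hl
          rw [Finset.mem_range] at hl
          have hl' : (l:ℝ) ≤ (m:ℝ) - 1 := by
            have : (l:ℝ) + 1 ≤ m := by exact_mod_cast hl
            linarith
          rw [abs_le]
          constructor <;> nlinarith [Nat.cast_nonneg (α := ℝ) j, Nat.cast_nonneg (α := ℝ) m]
    _ = ((j:ℝ) + m) ^ m := by rw [Finset.prod_const, Finset.card_range]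
  have hxp : |x ^ (ρ - 1 + (j:ℝ) - m)| ≤ (a ^ (ρ - 1 - (m:ℝ)) + b ^ (ρ - 1 - (m:ℝ))) * b ^ j := by
    have hsplit : x ^ (ρ - 1 + (j:ℝ) - m) = x ^ (ρ - 1 - (m:ℝ)) * x ^ (j:ℕ) := by
      rw [← Real.rpow_natCast x j, ← Real.rpow_add hx]; ring_nf
    rw [hsplit, abs_mul, abs_of_nonneg (Real.rpow_nonneg hx.le _),
      abs_of_nonneg (pow_nonneg hx.le _)]
    have h1 : x ^ (ρ - 1 - (m:ℝ)) ≤ a ^ (ρ - 1 - (m:ℝ)) + b ^ (ρ - 1 - (m:ℝ)) := by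
      rcases le_or_gt 0 (ρ - 1 - (m:ℝ)) with hc | hc
      · have := Real.rpow_le_rpow hx.le hxb hc
        have h0 : (0:ℝ) ≤ a ^ (ρ - 1 - (m:ℝ)) := Real.rpow_nonneg ha.le _
        linarith
      · have := Real.rpow_le_rpow_of_nonpos ha hax hc.le
        have h0 : (0:ℝ) ≤ b ^ (ρ - 1 - (m:ℝ)) := Real.rpow_nonneg hb.le _
        linarith
    have h2 : x ^ (j:ℕ) ≤ b ^ (j:ℕ) := pow_le_pow_left₀ hx.le hxb j
    exact mul_le_mul h1 h2 (pow_nonneg hx.le _) (by positivity)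
  rw [sTerm, abs_mul, abs_div, abs_mul, abs_pow, abs_neg, abs_one, one_pow, mul_one,
    Nat.abs_cast]
  rw [div_mul_eq_mul_div, div_le_iff₀ (by positivity : (0:ℝ) < (j.factorial:ℝ))]
  calc |∏ l ∈ Finset.range m, (ρ - 1 + (j:ℝ) - l)| * |x ^ (ρ - 1 + (j:ℝ) - m)|
      ≤ ((j:ℝ) + m) ^ m * ((a ^ (ρ - 1 - (m:ℝ)) + b ^ (ρ - 1 - (m:ℝ))) * b ^ j) :=
        mul_le_mul hprod hxp (abs_nonneg _) (by positivity)
  _ = (a ^ (ρ - 1 - (m:ℝ)) + b ^ (ρ - 1 - (m:ℝ))) * (((j:ℝ) + m) ^ m * b ^ j / j.factorial)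
      * j.factorial := by field_simp

lemma sFun_summable (ρ : ℝ) (hρ : ρ ∈ Set.Ioc (0:ℝ) 1) (m : ℕ) {x : ℝ} (hx : 0 < x) :
    Summable fun j => sTerm ρ m j x := by
  apply Summable.of_norm_bounded
    (((aux_summable m x hx.le).mul_left ((x ^ (ρ - 1 - (m:ℝ)) + x ^ (ρ - 1 - (m:ℝ))))))
  intro j
  rw [Real.norm_eq_abs]
  exact sTerm_bound ρ hρ m j hx le_rfl le_rfl

lemma sFun_hasDerivAt (ρ : ℝ) (hρ : ρ ∈ Set.Ioc (0:ℝ) 1) (m : ℕ) {θ : ℝ} (hθ : 0 < θ) :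
    HasDerivAt (sFun ρ m) (sFun ρ (m+1) θ) θ := by
  have h2 : (0:ℝ) < θ/2 := by linarith
  have H := hasDerivAt_tsum_of_isPreconnected
    (g := fun (j : ℕ) x => sTerm ρ m j x) (g' := fun (j : ℕ) y => sTerm ρ (m+1) j y)
    (u := fun j : ℕ => ((θ/2) ^ (ρ - 1 - ((m+1:ℕ):ℝ)) + (θ*2) ^ (ρ - 1 - ((m+1:ℕ):ℝ)))
      * (((j:ℝ) + ((m+1:ℕ):ℝ)) ^ (m+1) * (θ*2) ^ j / j.factorial))
    (t := Set.Ioo (θ/2) (θ*2)) (y₀ := θ) (y := θ)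
    ((aux_summable (m+1) (θ*2) (by linarith)).mul_left _)
    isOpen_Ioo (convex_Ioo _ _).isPreconnected
    (fun j y hy => sTerm_hasDerivAt ρ m j (by have := hy.1; intro h; rw [h] at this; linarith))
    (fun j y hy => by rw [Real.norm_eq_abs]; exact sTerm_bound ρ hρ (m+1) j h2 hy.1.le hy.2.le)
    ⟨by linarith, by linarith⟩ (sFun_summable ρ hρ m hθ) ⟨by linarith, by linarith⟩
  exact H

lemma sFun_zero (ρ : ℝ) {x : ℝ} (hx : 0 < x) :
    sFun ρ 0 x = x ^ (ρ - 1) * Real.exp (-x) := by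
  have hterm : ∀ j : ℕ, sTerm ρ 0 j x = x ^ (ρ - 1) * ((-x) ^ j / j.factorial) := by
    intro j
    rw [sTerm, Finset.prod_range_zero, one_mul,
      show ρ - 1 + (j:ℝ) - ((0:ℕ):ℝ) = (ρ - 1) + (j:ℝ) by push_cast; ring,
      Real.rpow_add hx, Real.rpow_natCast, neg_pow]
    ring
  rw [sFun, tsum_congr hterm, tsum_mul_left]
  congr 1
  rw [Real.exp_eq_exp_ℝ, NormedSpace.exp_eq_tsum_div]

lemma iter_g (ρ : ℝ) (hρ : ρ ∈ Set.Ioc (0:ℝ) 1) (m : ℕ) :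
    ∀ x : ℝ, 0 < x →
      iteratedDeriv m (fun x : ℝ => x ^ (ρ - 1) * Real.exp (-x)) x = sFun ρ m x := by
  induction m with
  | zero =>
    intro x hx
    rw [iteratedDeriv_zero, sFun_zero ρ hx]
  | succ m ih =>
    intro x hx
    rw [iteratedDeriv_succ]
    have hev : iteratedDeriv m (fun x : ℝ => x ^ (ρ - 1) * Real.exp (-x)) =ᶠ[nhds x] sFun ρ m :=
      Filter.eventuallyEq_of_mem (isOpen_Ioi.mem_nhds hx) (fun y hy => ih y hy)
    rw [hev.deriv_eq, (sFun_hasDerivAt ρ hρ m hx).deriv]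

lemma gamma_prod (x : ℝ) (m : ℕ) (hx : ∀ l : ℕ, l < m → x + l ≠ 0) :
    Real.Gamma (x + m) = (∏ l ∈ Finset.range m, (x + l)) * Real.Gamma x := by
  induction m with
  | zero => simp
  | succ m ih =>
    have h1 : x + ((m:ℝ) + 1) = (x + m) + 1 := by ring
    rw [show ((m+1:ℕ):ℝ) = (m:ℝ) + 1 by push_cast; ring, h1,
      Real.Gamma_add_one (hx m (Nat.lt_succ_self m)),
      ih (fun l hl => hx l (hl.trans (Nat.lt_succ_self m))), Finset.prod_range_succ]
    ring

lemma gamma_ratio (ρ : ℝ) (hρ : ρ ∈ Set.Ioc (0:ℝ) 1) (n j : ℕ) (hn : 1 ≤ n) :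
    Real.Gamma (ρ + j) / Real.Gamma (1 * (j:ℝ) + (ρ + 1 - n)) =
      ∏ l ∈ Finset.range (n-1), (ρ - 1 + (j:ℝ) - l) := by
  obtain ⟨hρ0, hρ1⟩ := hρ
  set x : ℝ := ρ + j + 1 - n with hxdef
  have harg : 1 * (j:ℝ) + (ρ + 1 - n) = x := by rw [hxdef]; ring
  rw [harg]
  by_cases hcase : ρ = 1 ∧ j + 1 < n
  · -- degenerate case : Gamma x = 0 and product has a zero factor
    obtain ⟨hρe, hjn⟩ := hcase
    have hx : x = -((n - (j+2) : ℕ) : ℝ) := by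
      rw [hxdef, hρe, Nat.cast_sub (by omega)]
      push_cast
      ring
    rw [hx, Real.Gamma_neg_nat_eq_zero, div_zero]
    symm
    apply Finset.prod_eq_zero (i := j) (Finset.mem_range.mpr (by omega))
    rw [hρe]; ring
  · -- main case
    have hmain : (∀ l : ℕ, l < n - 1 → x + l ≠ 0) ∧ (∀ m : ℕ, x ≠ -(m:ℝ)) := by
      rcases lt_or_eq_of_le hρ1 with hlt | heq
      · have hz : ∀ z : ℤ, ρ + (z:ℝ) ≠ 0 := by
          intro z h
          have h1 : (z:ℝ) = -ρ := by linarith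
          have h2 : (0:ℝ) < -(z:ℝ) := by rw [h1]; linarith
          have h3 : -(z:ℝ) < 1 := by rw [h1]; linarith
          have h2' : (0:ℤ) < -z := by exact_mod_cast h2
          have h3' : -z < 1 := by exact_mod_cast h3
          omega
        constructor
        · intro l _ h
          apply hz ((j:ℤ) + 1 - n + l)
          push_cast
          rw [hxdef] at h; push_cast at h; linarith
        · intro m h
          apply hz ((j:ℤ) + 1 - n + m)
          push_cast
          rw [hxdef] at h; push_cast at h; linarith
      · have hjn : n ≤ j + 1 := by
          by_contra hc
          exact hcase ⟨heq, by omega⟩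
        have hx1 : (1:ℝ) ≤ x := by
          rw [hxdef, heq]
          have : (n:ℝ) ≤ (j:ℝ) + 1 := by exact_mod_cast hjn
          linarith
        constructor
        · intro l _ h
          have : (0:ℝ) ≤ (l:ℝ) := Nat.cast_nonneg l
          linarith
        · intro m h
          have : (0:ℝ) ≤ (m:ℝ) := Nat.cast_nonneg m
          linarith
    have hsum : x + ((n-1:ℕ):ℝ) = ρ + j := by
      rw [hxdef, Nat.cast_sub hn]; push_cast; ring
    rw [← hsum, gamma_prod x (n-1) hmain.1, mul_div_assoc,
      div_self (Real.Gamma_ne_zero hmain.2), mul_one]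
    rw [← Finset.prod_range_reflect (fun l => ρ - 1 + (j:ℝ) - l) (n-1)]
    apply Finset.prod_congr rfl
    intro l hl
    rw [Finset.mem_range] at hl
    have hcast : ((n - 1 - 1 - l : ℕ) : ℝ) = (n:ℝ) - 2 - l := by
      have h1 : n - 1 - 1 - l + (l + 2) = n := by omega
      have := congrArg (fun k : ℕ => (k:ℝ)) h1
      push_cast at this
      linarith
    simp only [hcast]
    rw [hxdef]
    ring

lemma gcont : ∀ (ρ : ℝ), ContinuousOn (fun w : ℝ => Real.exp (-w) * w ^ (ρ - 1)) (Set.Ioi 0) := by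
  intro ρ
  apply ContinuousOn.mul (Continuous.continuousOn (by continuity))
  intro w hw
  exact (Real.continuousAt_rpow_const w _ (Or.inl (ne_of_gt hw))).continuousWithinAt

lemma uGamma_hasDerivAt (ρ : ℝ) (hρ0 : 0 < ρ) {x : ℝ} (hx : 0 < x) :
    HasDerivAt (uGamma ρ) (-(Real.exp (-x) * x ^ (ρ - 1))) x := by
  set f : ℝ → ℝ := fun w => Real.exp (-w) * w ^ (ρ - 1) with hf
  have hint : MeasureTheory.IntegrableOn f (Set.Ioi 0) := Real.GammaIntegral_convergent hρ0
  set F : ℝ → ℝ := fun y => (∫ w in Set.Ioi (0:ℝ), f w) - ∫ w in (0:ℝ)..y, f w with hF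
  have heq : ∀ y : ℝ, 0 < y → uGamma ρ y = F y := by
    intro y hy
    have hsplit : (∫ w in Set.Ioi (0:ℝ), f w)
        = (∫ w in Set.Ioc (0:ℝ) y, f w) + ∫ w in Set.Ioi y, f w := by
      rw [← MeasureTheory.setIntegral_union (Set.Ioc_disjoint_Ioi le_rfl) measurableSet_Ioi
        (hint.mono_set Set.Ioc_subset_Ioi_self) (hint.mono_set (Set.Ioi_subset_Ioi hy.le)),
        Set.Ioc_union_Ioi_eq_Ioi hy.le]
    rw [hF]
    simp only
    rw [intervalIntegral.integral_of_le hy.le, hsplit]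
    rw [uGamma]
    ring
  have hmeas : StronglyMeasurableAtFilter f (nhds x) :=
    ContinuousOn.stronglyMeasurableAtFilter isOpen_Ioi (gcont ρ) x hx
  have hcont : ContinuousAt f x :=
    (gcont ρ).continuousAt (isOpen_Ioi.mem_nhds hx)
  have hii : IntervalIntegrable f MeasureTheory.volume 0 x := by
    rw [intervalIntegrable_iff_integrableOn_Ioc_of_le hx.le]
    exact hint.mono_set Set.Ioc_subset_Ioi_self
  have hG : HasDerivAt (fun y => ∫ w in (0:ℝ)..y, f w) (f x) x :=
    intervalIntegral.integral_hasDerivAt_right hii hmeas hcont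
  have hFd : HasDerivAt F (-(f x)) x := hG.const_sub _
  exact hFd.congr_of_eventuallyEq
    (Filter.eventuallyEq_of_mem (isOpen_Ioi.mem_nhds hx) (fun y hy => heq y hy))

lemma part1 (ρ θ : ℝ) (hρ : ρ ∈ Set.Ioc (0 : ℝ) 1) (hθ : 0 < θ)
    (n : ℕ) (hn : 1 ≤ n) :
    θ ^ (ρ - (n : ℝ)) * prabhakar 1 (ρ + 1 - n) ρ (-θ)
      = (1 / Real.Gamma ρ) * sFun ρ (n-1) θ := by
  rw [prabhakar, ← tsum_mul_left, sFun, ← tsum_mul_left]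
  apply tsum_congr
  intro j
  have hratio := gamma_ratio ρ hρ n j hn
  rw [sTerm, ← hratio,
    show ρ - 1 + (j:ℝ) - ((n-1:ℕ):ℝ) = (ρ - (n:ℝ)) + (j:ℝ) by rw [Nat.cast_sub hn]; push_cast; ring,
    Real.rpow_add hθ, Real.rpow_natCast, neg_pow]
  simp only [div_eq_mul_inv, mul_inv]
  ring

theorem stmt_3 (ρ θ : ℝ) (hρ : ρ ∈ Set.Ioc (0 : ℝ) 1) (hθ : 0 < θ)
    (n : ℕ) (hn : 1 ≤ n) :
    θ ^ (ρ - (n : ℝ)) * prabhakar 1 (ρ + 1 - n) ρ (-θ)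
        = (1 / Real.Gamma ρ)
            * iteratedDeriv (n - 1) (fun x : ℝ => x ^ (ρ - 1) * Real.exp (-x)) θ ∧
    θ ^ (ρ - (n : ℝ)) * prabhakar 1 (ρ + 1 - n) ρ (-θ)
        = -(1 / Real.Gamma ρ) * iteratedDeriv n (fun x : ℝ => uGamma ρ x) θ := by
  have h1 : θ ^ (ρ - (n : ℝ)) * prabhakar 1 (ρ + 1 - n) ρ (-θ)
      = (1 / Real.Gamma ρ)
          * iteratedDeriv (n - 1) (fun x : ℝ => x ^ (ρ - 1) * Real.exp (-x)) θ := by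
    rw [iter_g ρ hρ (n-1) θ hθ]
    exact part1 ρ θ hρ hθ n hn
  refine ⟨h1, ?_⟩
  rw [h1]
  have hev : deriv (fun x : ℝ => uGamma ρ x) =ᶠ[nhds θ]
      (fun y : ℝ => -(y ^ (ρ - 1) * Real.exp (-y))) := by
    apply Filter.eventuallyEq_of_mem (isOpen_Ioi.mem_nhds hθ)
    intro y hy
    have hd := uGamma_hasDerivAt ρ hρ.1 (Set.mem_Ioi.mp hy)
    have : deriv (uGamma ρ) y = -(Real.exp (-y) * y ^ (ρ - 1)) := hd.deriv
    simp only
    rw [show (fun x : ℝ => uGamma ρ x) = uGamma ρ from rfl, this]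
    ring
  have h2 : iteratedDeriv n (fun x : ℝ => uGamma ρ x) θ
      = - iteratedDeriv (n-1) (fun x : ℝ => x ^ (ρ - 1) * Real.exp (-x)) θ := by
    conv_lhs => rw [show n = (n-1)+1 by omega]
    rw [iteratedDeriv_succ', hev.iteratedDeriv_eq, iteratedDeriv_fun_neg]
  rw [h2]
  ring
end

section
/- Let ρ ∈ (0,1) and t, x > 0. Then ∫_0^{min(t,x)} z^{ρ-1} (x-z)^{-ρ} dz = ∫_{max(t,x)}^∞ t^ρ y^{-1} (y-t)^{-ρ} dy; equivalently, with h_ρ and l_ρ the densities of the hitting time T_ρ(x) and of Y_ρ(t), the distributional inverse relation P{T_ρ(x) < t} = P{Y_ρ(t) > x} holds: ∫_0^t h_ρ(z,x) dz = ∫_x^∞ l_ρ(y,t) dy. -/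
open MeasureTheory Real Set

/-- Transition density `h_ρ(t,x)` of the hitting-time process `T_ρ(x)`. -/
noncomputable def hDens (ρ t x : ℝ) : ℝ :=
  if 0 < t ∧ t < x then t ^ (ρ - 1) * (x - t) ^ (-ρ) / (Real.Gamma ρ * Real.Gamma (1 - ρ))
  else 0

/-- Transition density `l_ρ(y,t)` of the process `Y_ρ`. -/
noncomputable def lTrans (ρ y t : ℝ) : ℝ :=
  if 0 < t ∧ t < y then t ^ ρ / (Real.Gamma ρ * Real.Gamma (1 - ρ) * y * (y - t) ^ ρ)
  else 0

theorem stmt_15 (ρ t x : ℝ) (hρ : ρ ∈ Set.Ioo (0 : ℝ) 1) (ht : 0 < t) (hx : 0 < x) :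
    (∫ z in Set.Ioo (0 : ℝ) (min t x), z ^ (ρ - 1) * (x - z) ^ (-ρ)
        = ∫ y in Set.Ioi (max t x), t ^ ρ * y⁻¹ * (y - t) ^ (-ρ)) ∧
    (∫ z in Set.Ioo (0 : ℝ) t, hDens ρ z x = ∫ y in Set.Ioi x, lTrans ρ y t) := by
  obtain ⟨hρ0, hρ1⟩ := hρ
  have hm0 : (0:ℝ) < min t x := lt_min ht hx
  have hM0 : (0:ℝ) < max t x := hm0.trans_le (min_le_max)
  have hmM : min t x * max t x = t * x := min_mul_max t x
  have htx : (0:ℝ) < t * x := mul_pos ht hx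
  -- image of the substitution map
  have himg : (fun y => t * x / y) '' Ioi (max t x) = Ioo 0 (min t x) := by
    ext z
    simp only [mem_image, mem_Ioi, mem_Ioo]
    constructor
    · rintro ⟨y, hy, rfl⟩
      have hy0 : (0:ℝ) < y := hM0.trans hy
      refine ⟨div_pos htx hy0, ?_⟩
      rw [div_lt_iff₀ hy0, ← hmM]
      exact mul_lt_mul_of_pos_left hy hm0
    · rintro ⟨hz0, hzm⟩
      refine ⟨t * x / z, ?_, ?_⟩
      · rw [lt_div_iff₀ hz0, ← hmM, mul_comm (max t x) z]
        exact mul_lt_mul_of_pos_right hzm hM0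
      · field_simp
  have hderiv : ∀ y ∈ Ioi (max t x), HasDerivWithinAt (fun y => t * x / y)
      (-(t * x) / y ^ 2) (Ioi (max t x)) y := by
    intro y hy
    have hy0 : (0:ℝ) < y := hM0.trans hy
    have h := ((hasDerivAt_inv hy0.ne').const_mul (t * x)).hasDerivWithinAt
      (s := Ioi (max t x))
    have heq : t * x * -(y ^ 2)⁻¹ = -(t * x) / y ^ 2 := by ring
    simpa [div_eq_mul_inv, heq] using h
  have hinj : InjOn (fun y => t * x / y) (Ioi (max t x)) := by
    intro a ha b hb h
    have ha0 : a ≠ 0 := (hM0.trans ha).ne'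
    have hb0 : b ≠ 0 := (hM0.trans hb).ne'
    have h' : t * x / a = t * x / b := h
    rw [div_eq_div_iff (hM0.trans ha).ne' (hM0.trans hb).ne'] at h'
    exact (mul_left_cancel₀ htx.ne' h').symm
  have key : (∫ z in Ioo (0:ℝ) (min t x), z ^ (ρ - 1) * (x - z) ^ (-ρ))
      = ∫ y in Ioi (max t x), t ^ ρ * y⁻¹ * (y - t) ^ (-ρ) := by
    rw [← himg,
      integral_image_eq_integral_abs_deriv_smul measurableSet_Ioi hderiv hinj]
    refine setIntegral_congr_fun measurableSet_Ioi ?_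
    intro y hy
    have hy0 : (0:ℝ) < y := hM0.trans hy
    have hyt : t < y := (le_max_left t x).trans_lt hy
    have hyx : x < y := (le_max_right t x).trans_lt hy
    have hytd : (0:ℝ) < y - t := sub_pos.mpr hyt
    simp only [smul_eq_mul]
    have habs : |(-(t * x) / y ^ 2)| = t * x / y ^ 2 := by
      rw [abs_div, abs_neg, abs_of_pos htx, abs_of_pos (by positivity)]
    have hsub : x - t * x / y = x * (y - t) / y := by
      field_simp
    rw [habs, hsub, Real.div_rpow htx.le hy0.le,
      Real.div_rpow (by positivity) hy0.le,
      Real.mul_rpow ht.le hx.le, Real.mul_rpow hx.le hytd.le,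
      Real.rpow_sub ht, Real.rpow_sub hx, Real.rpow_sub hy0, Real.rpow_one,
      Real.rpow_neg hx.le, Real.rpow_neg hytd.le, Real.rpow_neg hy0.le]
    have h1 : t ^ ρ ≠ 0 := by positivity
    have h2 : x ^ ρ ≠ 0 := by positivity
    have h3 : y ^ ρ ≠ 0 := by positivity
    have h4 : (y - t) ^ ρ ≠ 0 := by positivity
    field_simp
    ring
    simp only [Real.rpow_one, pow_one, mul_comm]
  have hC : (0:ℝ) < Real.Gamma ρ * Real.Gamma (1 - ρ) :=
    mul_pos (Real.Gamma_pos_of_pos hρ0) (Real.Gamma_pos_of_pos (by linarith))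
  have eq1 : (∫ z in Ioo (0:ℝ) t, hDens ρ z x)
      = (∫ z in Ioo (0:ℝ) (min t x), z ^ (ρ - 1) * (x - z) ^ (-ρ))
        / (Real.Gamma ρ * Real.Gamma (1 - ρ)) := by
    have hind : ∀ z : ℝ, hDens ρ z x = Set.indicator (Ioo (0:ℝ) x)
        (fun z => z ^ (ρ - 1) * (x - z) ^ (-ρ) / (Real.Gamma ρ * Real.Gamma (1 - ρ))) z := by
      intro z
      unfold hDens
      by_cases h : 0 < z ∧ z < x <;>
        simp [Set.indicator_apply, mem_Ioo, h]
    simp_rw [hind]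
    rw [setIntegral_indicator measurableSet_Ioo, Set.Ioo_inter_Ioo, max_self,
      integral_div]
  have eq2 : (∫ y in Ioi x, lTrans ρ y t)
      = (∫ y in Ioi (max t x), t ^ ρ * y⁻¹ * (y - t) ^ (-ρ))
        / (Real.Gamma ρ * Real.Gamma (1 - ρ)) := by
    have hind : ∀ y : ℝ, lTrans ρ y t = Set.indicator (Ioi t)
        (fun y => t ^ ρ / (Real.Gamma ρ * Real.Gamma (1 - ρ) * y * (y - t) ^ ρ)) y := by
      intro y
      unfold lTrans
      by_cases h : t < y <;>
        simp [Set.indicator_apply, mem_Ioi, h, ht]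
    simp_rw [hind]
    rw [setIntegral_indicator measurableSet_Ioi, Set.Ioi_inter_Ioi,
      sup_comm, ← integral_div]
    refine setIntegral_congr_fun measurableSet_Ioi ?_
    intro y hy
    have hy0 : (0:ℝ) < y := hM0.trans hy
    have hyt : t < y := (le_max_left t x).trans_lt hy
    have hytd : (0:ℝ) < y - t := sub_pos.mpr hyt
    have h4 : (y - t) ^ ρ ≠ 0 := by positivity
    simp only
    rw [Real.rpow_neg hytd.le]
    field_simp
  exact ⟨key, by rw [eq1, eq2, key]⟩
end

section
/- Let ρ ∈ (0,1], α ∈ (0,1], ξ ∈ ℝ with ξ ≠ 0, and set A := ξ²/2 and Φ(s) := Γ(ρ, A s^α)/Γ(ρ) for s ≥ 0. Then for every t ≥ 0, Φ(t) = 1 - αA ∫_0^t e^{-A(t^α - s^α)} · (A(t^α - s^α))^{ρ-1} · E_{ρ,ρ}((A(t^α - s^α))^ρ) · s^{α-1} · Φ(s) ds, where E_{ρ,ρ}(z) = ∑_{j=0}^∞ z^j/Γ(ρj+ρ) is the two-parameter Mittag-Leffler function. -/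
open MeasureTheory Real Set

/-- Two-parameter Mittag-Leffler function `E_{a,b}(z) = ∑_{j≥0} z^j / Γ(a j + b)`. -/
noncomputable def mittagLeffler (a b z : ℝ) : ℝ :=
  ∑' j : ℕ, z ^ j / Real.Gamma (a * j + b)

noncomputable def gk (a w : ℝ) : ℝ := Real.exp (-w) * w ^ (a - 1)

noncomputable def lg (a x : ℝ) : ℝ := ∫ u in Set.Ioo 0 x, gk a u

lemma gk_nonneg (a : ℝ) {w : ℝ} (hw : 0 ≤ w) : 0 ≤ gk a w :=
  mul_nonneg (Real.exp_nonneg _) (Real.rpow_nonneg hw _)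

lemma integrableOn_gk {a : ℝ} (ha : 0 < a) : IntegrableOn (gk a) (Ioi 0) := by
  exact Real.GammaIntegral_convergent ha

lemma integrableOn_gk_Ioo {a x : ℝ} (ha : 0 < a) : IntegrableOn (gk a) (Ioo 0 x) :=
  (integrableOn_gk ha).mono_set Ioo_subset_Ioi_self

lemma continuousOn_gk (a : ℝ) : ContinuousOn (gk a) (Ioi 0) := by
  unfold gk
  refine (Real.continuous_exp.comp continuous_neg).continuousOn.mul ?_
  intro x hx
  exact (Real.continuousAt_rpow_const x _ (Or.inl (ne_of_gt hx))).continuousWithinAt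

lemma lg_nonneg (a x : ℝ) : 0 ≤ lg a x :=
  setIntegral_nonneg measurableSet_Ioo fun w hw => gk_nonneg a hw.1.le

lemma gk_ae_nonneg (a : ℝ) {s : Set ℝ} (hs : MeasurableSet s) (h : s ⊆ Ioi 0) :
    0 ≤ᵐ[volume.restrict s] gk a := by
  refine Filter.eventually_of_mem (self_mem_ae_restrict hs) fun w hw => ?_
  exact gk_nonneg a (le_of_lt (h hw))

lemma lg_mono {a : ℝ} (ha : 0 < a) : Monotone (lg a) := by
  intro x y hxy
  refine setIntegral_mono_set (integrableOn_gk_Ioo ha)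
    (gk_ae_nonneg a measurableSet_Ioo Ioo_subset_Ioi_self)
    (HasSubset.Subset.eventuallyLE fun w hw => ⟨hw.1, hw.2.trans_le hxy⟩)

lemma lg_le_Gamma {a : ℝ} (ha : 0 < a) (x : ℝ) : lg a x ≤ Real.Gamma a := by
  rw [Real.Gamma_eq_integral ha]
  refine setIntegral_mono_set (integrableOn_gk ha)
    (gk_ae_nonneg a measurableSet_Ioi (subset_refl _))
    (HasSubset.Subset.eventuallyLE Ioo_subset_Ioi_self)

lemma uGamma_eq {a x : ℝ} (ha : 0 < a) (hx : 0 ≤ x) :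
    uGamma a x = Real.Gamma a - lg a x := by
  have hsplit : (Ioc (0:ℝ) x) ∪ Ioi x = Ioi 0 := Ioc_union_Ioi_eq_Ioi hx
  have hdisj : Disjoint (Ioc (0:ℝ) x) (Ioi x) := Ioc_disjoint_Ioi le_rfl
  have h1 : IntegrableOn (gk a) (Ioc 0 x) :=
    (integrableOn_gk ha).mono_set Ioc_subset_Ioi_self
  have h2 : IntegrableOn (gk a) (Ioi x) :=
    (integrableOn_gk ha).mono_set (Ioi_subset_Ioi hx)
  have := setIntegral_union hdisj measurableSet_Ioi h1 h2 (f := gk a) (μ := volume)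
  rw [hsplit] at this
  have hG : Real.Gamma a = ∫ w in Ioi (0:ℝ), gk a w := by
    rw [Real.Gamma_eq_integral ha]; rfl
  have hIoo : ∫ w in Ioc (0:ℝ) x, gk a w = lg a x := (integral_Ioc_eq_integral_Ioo)
  have : Real.Gamma a = lg a x + uGamma a x := by
    rw [hG, this, hIoo]; rfl
  linarith

lemma uGamma_nonneg (a x : ℝ) (hx : 0 ≤ x) : 0 ≤ uGamma a x := by
  refine setIntegral_nonneg measurableSet_Ioi fun w hw => ?_
  exact gk_nonneg a (hx.trans (le_of_lt hw))

lemma real_beta {a b z : ℝ} (ha : 0 < a) (hb : 0 < b) (hz : 0 < z) :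
    ∫ y in Ioo (0:ℝ) z, y ^ (a - 1) * (z - y) ^ (b - 1)
      = Real.Gamma a * Real.Gamma b / Real.Gamma (a + b) * z ^ (a + b - 1) := by
  have hab : (0:ℝ) < a + b := by linarith
  have hGab : Real.Gamma (a + b) ≠ 0 := (Real.Gamma_pos_of_pos hab).ne'
  have hcast : ((a:ℂ) + b) = ((a + b : ℝ) : ℂ) := by push_cast; ring
  have hC := Complex.betaIntegral_scaled (a : ℂ) (b : ℂ) hz
  have hB : Complex.Gamma (a:ℂ) * Complex.Gamma (b:ℂ)
      = Complex.Gamma ((a:ℂ) + b) * Complex.betaIntegral a b :=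
    Complex.Gamma_mul_Gamma_eq_betaIntegral (by simpa using ha) (by simpa using hb)
  have h0 : Complex.Gamma ((a:ℂ) + b) ≠ 0 := by
    rw [hcast, Complex.Gamma_ofReal]
    exact_mod_cast hGab
  have hbeta : Complex.betaIntegral a b
      = ((Real.Gamma a * Real.Gamma b / Real.Gamma (a + b) : ℝ) : ℂ) := by
    have h1 : Complex.betaIntegral a b
        = Complex.Gamma (a:ℂ) * Complex.Gamma (b:ℂ) / Complex.Gamma ((a:ℂ) + b) := by
      rw [eq_div_iff h0, mul_comm]
      exact hB.symm
    rw [h1, Complex.Gamma_ofReal, Complex.Gamma_ofReal, hcast, Complex.Gamma_ofReal]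
    norm_cast
  have key : (∫ x in (0:ℝ)..z, (x:ℂ) ^ ((a:ℂ) - 1) * ((z:ℂ) - x) ^ ((b:ℂ) - 1))
      = ((∫ x in (0:ℝ)..z, x ^ (a-1) * (z - x) ^ (b-1) : ℝ) : ℂ) := by
    rw [← intervalIntegral.integral_ofReal]
    refine intervalIntegral.integral_congr fun x hx => ?_
    rw [uIcc_of_le hz.le] at hx
    rw [Complex.ofReal_mul, Complex.ofReal_cpow hx.1,
      Complex.ofReal_cpow (by linarith [hx.2] : (0:ℝ) ≤ z - x)]
    push_cast
    ring
  have hreal : (∫ x in (0:ℝ)..z, x ^ (a-1) * (z - x) ^ (b-1))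
      = ∫ y in Ioo (0:ℝ) z, y ^ (a - 1) * (z - y) ^ (b - 1) := by
    rw [intervalIntegral.integral_of_le hz.le, integral_Ioc_eq_integral_Ioo]
  rw [key, hreal] at hC
  apply Complex.ofReal_injective
  rw [hC, hbeta, show ((a:ℂ) + b - 1) = ((a + b - 1 : ℝ) : ℂ) by push_cast; ring,
    ← Complex.ofReal_cpow hz.le, ← Complex.ofReal_mul, Complex.ofReal_inj]
  ring

lemma integral_Ioo_reflect (f : ℝ → ℝ) {x : ℝ} (hx : 0 ≤ x) :
    ∫ u in Ioo (0:ℝ) x, f (x - u) = ∫ u in Ioo (0:ℝ) x, f u := by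
  rw [← integral_Ioc_eq_integral_Ioo, ← intervalIntegral.integral_of_le hx,
    intervalIntegral.integral_comp_sub_left f x, sub_self, sub_zero,
    intervalIntegral.integral_of_le hx, integral_Ioc_eq_integral_Ioo]

lemma integral_Ioo_translate (f : ℝ → ℝ) {y x : ℝ} (hyx : y ≤ x) :
    ∫ z in Ioo y x, f (z - y) = ∫ v in Ioo (0:ℝ) (x - y), f v := by
  rw [← integral_Ioc_eq_integral_Ioo, ← intervalIntegral.integral_of_le hyx,
    intervalIntegral.integral_comp_sub_right f y, sub_self,
    intervalIntegral.integral_of_le (by linarith), integral_Ioc_eq_integral_Ioo]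


lemma Gamma_lower {c M : ℝ} (hc : 0 ≤ c) (hM : 0 < M) :
    Real.exp (-(2*M)) * M ^ c * M ≤ Real.Gamma (c + 1) := by
  rw [Real.Gamma_eq_integral (by linarith)]
  have h1 : IntegrableOn (fun w => Real.exp (-w) * w ^ (c + 1 - 1)) (Ioi 0) :=
    Real.GammaIntegral_convergent (by linarith)
  have h2 : ∫ w in Ioo M (2*M), Real.exp (-(2*M)) * M ^ c
      = Real.exp (-(2*M)) * M ^ c * M := by
    rw [setIntegral_const, measureReal_def, Real.volume_Ioo, ENNReal.toReal_ofReal (by linarith), smul_eq_mul]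
    ring
  calc Real.exp (-(2*M)) * M ^ c * M
      = ∫ w in Ioo M (2*M), Real.exp (-(2*M)) * M ^ c := h2.symm
    _ ≤ ∫ w in Ioo M (2*M), Real.exp (-w) * w ^ (c + 1 - 1) := by
        refine setIntegral_mono_on (integrable_const _)
          (h1.mono_set (fun w hw => lt_trans hM hw.1)) measurableSet_Ioo ?_
        intro w hw
        have hw1 : M < w := hw.1
        have hw2 : w < 2*M := hw.2
        have : Real.exp (-(2*M)) ≤ Real.exp (-w) := Real.exp_le_exp.mpr (by linarith)
        have h3 : M ^ c ≤ w ^ (c + 1 - 1) := by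
          rw [add_sub_cancel_right]
          exact Real.rpow_le_rpow hM.le hw1.le hc
        exact mul_le_mul this h3 (Real.rpow_nonneg hM.le c) (Real.exp_nonneg _)
    _ ≤ ∫ w in Ioi 0, Real.exp (-w) * w ^ (c + 1 - 1) := by
        refine setIntegral_mono_set h1 ?_ (HasSubset.Subset.eventuallyLE fun w hw => lt_trans hM hw.1)
        refine Filter.eventually_of_mem (self_mem_ae_restrict measurableSet_Ioi) fun w hw => ?_
        exact mul_nonneg (Real.exp_nonneg _) (Real.rpow_nonneg (le_of_lt hw) _)


lemma lg_le_rpow {c x : ℝ} (hc : 0 < c) (hx : 0 < x) : lg c x ≤ x ^ c / c := by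
  have hint : IntegrableOn (fun u : ℝ => u ^ (c - 1)) (Ioo 0 x) := by
    have := (intervalIntegral.intervalIntegrable_rpow' (a := 0) (b := x) (by linarith : (-1:ℝ) < c - 1)).1
    exact this.mono_set Ioo_subset_Ioc_self
  have h1 : lg c x ≤ ∫ u in Ioo (0:ℝ) x, u ^ (c - 1) := by
    refine setIntegral_mono_on ?_ hint measurableSet_Ioo fun u hu => ?_
    · exact ((Real.GammaIntegral_convergent hc).mono_set Ioo_subset_Ioi_self :)
    · unfold gk
      calc Real.exp (-u) * u ^ (c-1) ≤ 1 * u ^ (c-1) := by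
            refine mul_le_mul_of_nonneg_right ?_ (Real.rpow_nonneg hu.1.le _)
            exact Real.exp_le_one_iff.mpr (by linarith [hu.1])
        _ = u ^ (c-1) := one_mul _
  have h2 : ∫ u in Ioo (0:ℝ) x, u ^ (c - 1) = x ^ c / c := by
    rw [← integral_Ioc_eq_integral_Ioo, ← intervalIntegral.integral_of_le hx.le]
    rw [integral_rpow (Or.inl (by linarith))]
    rw [Real.zero_rpow (by linarith : c - 1 + 1 ≠ 0)]
    ring_nf
  linarith


/-- key geometric bound -/
lemma lg_div_Gamma_le {c x : ℝ} (hc : 0 < c) (hx : 0 < x) :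
    lg c x / Real.Gamma c ≤ Real.exp (2 * (Real.exp 1 * x)) / (Real.exp 1 * x) * Real.exp (-c) := by
  set M := Real.exp 1 * x with hMdef
  have hM : 0 < M := mul_pos (Real.exp_pos 1) hx
  have hGc : 0 < Real.Gamma c := Real.Gamma_pos_of_pos hc
  have hG1 : Real.Gamma (c + 1) = c * Real.Gamma c := Real.Gamma_add_one hc.ne'
  have h1 : lg c x / Real.Gamma c ≤ x ^ c / Real.Gamma (c + 1) := by
    rw [hG1]
    rw [div_le_div_iff₀ hGc (by positivity)]
    calc lg c x * (c * Real.Gamma c) ≤ (x ^ c / c) * (c * Real.Gamma c) := by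
          exact mul_le_mul_of_nonneg_right (lg_le_rpow hc hx) (by positivity)
      _ = x ^ c * Real.Gamma c := by field_simp
  have h2 : x ^ c / Real.Gamma (c + 1) ≤ x ^ c / (Real.exp (-(2*M)) * M ^ c * M) := by
    refine div_le_div_of_nonneg_left (Real.rpow_nonneg hx.le c) (by positivity) ?_
    exact Gamma_lower hc.le hM
  have h3 : x ^ c / (Real.exp (-(2*M)) * M ^ c * M)
      = Real.exp (2*M) / M * Real.exp (-c) := by
    have hxM : x / M = Real.exp (-1) := by
      rw [hMdef]
      rw [Real.exp_neg]
      field_simp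
    have hpow : (x / M) ^ c = Real.exp (-c) := by
      rw [hxM, ← Real.exp_mul]
      norm_num
    rw [← hpow]
    rw [Real.div_rpow hx.le hM.le, Real.exp_neg]
    field_simp
  calc lg c x / Real.Gamma c ≤ x ^ c / Real.Gamma (c+1) := h1
    _ ≤ _ := h2
    _ = _ := h3


lemma integrableOn_gk_shift {b y x : ℝ} (hb : 0 < b) :
    IntegrableOn (fun z => gk b (z - y)) (Ioo y x) := by
  rcases le_or_gt x y with h | h
  · rw [Ioo_eq_empty (by exact fun hlt => absurd h (not_le.mpr hlt))]
    exact integrableOn_empty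
  · have h1 : IntervalIntegrable (gk b) volume 0 (x - y) := by
      rw [intervalIntegrable_iff_integrableOn_Ioc_of_le (by linarith)]
      exact (integrableOn_gk hb).mono_set Ioc_subset_Ioi_self
    have h2 := h1.comp_sub_right y
    rw [zero_add] at h2
    have h3 : x - y + y = x := by ring
    rw [h3] at h2
    rw [intervalIntegrable_iff_integrableOn_Ioc_of_le h.le] at h2
    exact h2.mono_set Ioo_subset_Ioc_self

section conv
variable {a b x : ℝ}

lemma conv_lg (ha : 0 < a) (hb : 0 < b) (hx : 0 < x) :
    ∫ u in Ioo (0:ℝ) x, gk a (x - u) * lg b u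
      = Real.Gamma a * Real.Gamma b / Real.Gamma (a + b) * lg (a + b) x := by
  set B := Real.Gamma a * Real.Gamma b / Real.Gamma (a + b) with hB
  set S : Set (ℝ × ℝ) := {p | 0 < p.1 ∧ p.1 < p.2 ∧ p.2 < x} with hS
  set g : ℝ × ℝ → ℝ := fun p => gk a p.1 * gk b (p.2 - p.1) with hg
  set f : ℝ × ℝ → ℝ := S.indicator g with hf
  have hSopen : IsOpen S := by
    have : S = (fun p : ℝ × ℝ => p.1) ⁻¹' Ioi 0 ∩
        ((fun p : ℝ × ℝ => p.2 - p.1) ⁻¹' Ioi 0 ∩ (fun p : ℝ × ℝ => p.2) ⁻¹' Iio x) := by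
      ext p; simp [hS, sub_pos]
    rw [this]
    exact (isOpen_Ioi.preimage continuous_fst).inter
      ((isOpen_Ioi.preimage (continuous_snd.sub continuous_fst)).inter
        (isOpen_Iio.preimage continuous_snd))
  have hSm : MeasurableSet S := hSopen.measurableSet
  have hgS : ContinuousOn g S := by
    refine ContinuousOn.mul ?_ ?_
    · exact (continuousOn_gk a).comp continuous_fst.continuousOn fun p hp => hp.1
    · exact (continuousOn_gk b).comp (continuous_snd.sub continuous_fst).continuousOn
        fun p hp => sub_pos.mpr hp.2.1
  have hfm : AEStronglyMeasurable f (volume.prod volume) := by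
    rw [hf, aestronglyMeasurable_indicator_iff hSm]
    exact hgS.aestronglyMeasurable hSm
  -- sections in z
  have hsec1 : ∀ y ∈ Ioo (0:ℝ) x, (fun z => f (y, z))
      = (Ioo y x).indicator (fun z => gk a y * gk b (z - y)) := by
    intro y hy
    funext z
    by_cases hz : z ∈ Ioo y x
    · rw [indicator_of_mem hz, hf, indicator_of_mem (by exact ⟨hy.1, hz.1, hz.2⟩)]
    · rw [indicator_of_notMem hz, hf, indicator_of_notMem]
      intro hmem
      exact hz ⟨hmem.2.1, hmem.2.2⟩
  have hsec0 : ∀ y, y ∉ Ioo (0:ℝ) x → (fun z => f (y, z)) = 0 := by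
    intro y hy
    funext z
    rw [hf, indicator_of_notMem, Pi.zero_apply]
    intro hmem
    exact hy ⟨hmem.1, lt_trans hmem.2.1 hmem.2.2⟩
  have hfnn : ∀ p, 0 ≤ f p := by
    intro p
    rw [hf]
    by_cases hp : p ∈ S
    · rw [indicator_of_mem hp]
      exact mul_nonneg (gk_nonneg a hp.1.le) (gk_nonneg b (sub_pos.mpr hp.2.1).le)
    · rw [indicator_of_notMem hp]
  -- inner integral in z
  have hinner : ∀ y ∈ Ioo (0:ℝ) x, ∫ z, f (y, z) = gk a y * lg b (x - y) := by
    intro y hy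
    rw [hsec1 y hy, integral_indicator measurableSet_Ioo, integral_const_mul,
      integral_Ioo_translate _ hy.2.le]
    rfl
  -- integrability of sections
  have hsecint : ∀ y, Integrable (fun z => f (y, z)) := by
    intro y
    by_cases hy : y ∈ Ioo (0:ℝ) x
    · rw [hsec1 y hy]
      rw [integrable_indicator_iff measurableSet_Ioo]
      exact (integrableOn_gk_shift hb).const_mul _
    · rw [hsec0 y hy]; exact integrable_zero _ _ _
  -- the function y ↦ ∫ z, f (y,z)
  have houter_eq : (fun y => ∫ z, f (y, z))
      = (Ioo (0:ℝ) x).indicator (fun y => gk a y * lg b (x - y)) := by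
    funext y
    by_cases hy : y ∈ Ioo (0:ℝ) x
    · rw [hinner y hy, indicator_of_mem hy]
    · rw [hsec0 y hy, indicator_of_notMem hy]; simp
  have houter_meas : AEStronglyMeasurable
      ((Ioo (0:ℝ) x).indicator (fun y => gk a y * lg b (x - y))) volume := by
    rw [aestronglyMeasurable_indicator_iff measurableSet_Ioo]
    refine AEStronglyMeasurable.mul ?_ ?_
    · exact ((continuousOn_gk a).mono Ioo_subset_Ioi_self).aestronglyMeasurable measurableSet_Ioo
    · exact ((lg_mono hb).measurable.comp (measurable_const.sub measurable_id)).aestronglyMeasurable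
  have houter_int : Integrable ((Ioo (0:ℝ) x).indicator
      (fun y => gk a y * lg b (x - y))) volume := by
    refine Integrable.mono' (g := (Ioo (0:ℝ) x).indicator (fun y => gk a y * Real.Gamma b)) ?_
      houter_meas ?_
    · rw [integrable_indicator_iff measurableSet_Ioo]
      exact (integrableOn_gk_Ioo ha).mul_const _
    · refine Filter.Eventually.of_forall fun y => ?_
      by_cases hy : y ∈ Ioo (0:ℝ) x
      · rw [indicator_of_mem hy, indicator_of_mem hy, Real.norm_eq_abs, abs_of_nonneg
          (mul_nonneg (gk_nonneg a hy.1.le) (lg_nonneg _ _))]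
        exact mul_le_mul_of_nonneg_left (lg_le_Gamma hb _) (gk_nonneg a hy.1.le)
      · rw [indicator_of_notMem hy, indicator_of_notMem hy]
        simp
  -- integrability on the product
  have hfint : Integrable f (volume.prod volume) := by
    rw [integrable_prod_iff hfm]
    constructor
    · exact Filter.Eventually.of_forall hsecint
    · refine Integrable.congr houter_int ?_
      refine Filter.Eventually.of_forall fun y => ?_
      rw [← houter_eq]
      simp only []
      rw [integral_congr_ae (Filter.Eventually.of_forall fun z =>
        (Real.norm_eq_abs _).trans (abs_of_nonneg (hfnn (y, z))))]
  -- sections in y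
  have hsecy1 : ∀ z ∈ Ioo (0:ℝ) x, (fun y => f (y, z))
      = (Ioo (0:ℝ) z).indicator (fun y => gk a y * gk b (z - y)) := by
    intro z hz
    funext y
    by_cases hy : y ∈ Ioo (0:ℝ) z
    · rw [indicator_of_mem hy, hf, indicator_of_mem (by exact ⟨hy.1, hy.2, hz.2⟩)]
    · rw [indicator_of_notMem hy, hf, indicator_of_notMem]
      intro hmem
      exact hy ⟨hmem.1, hmem.2.1⟩
  have hsecy0 : ∀ z, z ∉ Ioo (0:ℝ) x → (fun y => f (y, z)) = 0 := by
    intro z hz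
    funext y
    rw [hf, indicator_of_notMem, Pi.zero_apply]
    intro hmem
    exact hz ⟨lt_trans hmem.1 hmem.2.1, hmem.2.2⟩
  have hinnery : ∀ z ∈ Ioo (0:ℝ) x, ∫ y, f (y, z) = B * gk (a + b) z := by
    intro z hz
    rw [hsecy1 z hz, integral_indicator measurableSet_Ioo]
    have step : ∫ y in Ioo (0:ℝ) z, gk a y * gk b (z - y)
        = ∫ y in Ioo (0:ℝ) z, Real.exp (-z) * (y ^ (a-1) * (z - y) ^ (b-1)) := by
      refine setIntegral_congr_fun measurableSet_Ioo fun y hy => ?_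
      have hexp : Real.exp (-y) * Real.exp (-(z - y)) = Real.exp (-z) := by
        rw [← Real.exp_add]; congr 1; ring
      unfold gk
      rw [← hexp]; ring
    rw [step, integral_const_mul, real_beta ha hb hz.1]
    unfold gk
    ring
  have hRfun : (fun z => ∫ y, f (y, z))
      = (Ioo (0:ℝ) x).indicator (fun z => B * gk (a + b) z) := by
    funext z
    by_cases hz : z ∈ Ioo (0:ℝ) x
    · rw [hinnery z hz, indicator_of_mem hz]
    · rw [hsecy0 z hz, indicator_of_notMem hz]; simp
  -- swap
  have hswap : ∫ y, ∫ z, f (y, z) = ∫ z, ∫ y, f (y, z) :=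
    integral_integral_swap (f := fun y z => f (y, z)) hfint
  -- LHS equals the first iterated integral
  have hLHS : ∫ u in Ioo (0:ℝ) x, gk a (x - u) * lg b u = ∫ y, ∫ z, f (y, z) := by
    have e1 : ∫ u in Ioo (0:ℝ) x, gk a (x - u) * lg b u
        = ∫ u in Ioo (0:ℝ) x, (fun w => gk a w * lg b (x - w)) (x - u) := by
      refine setIntegral_congr_fun measurableSet_Ioo fun u hu => ?_
      simp only [sub_sub_cancel]
    rw [e1, integral_Ioo_reflect (fun w => gk a w * lg b (x - w)) hx.le, houter_eq,
      integral_indicator measurableSet_Ioo]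
  rw [hLHS, hswap, hRfun, integral_indicator measurableSet_Ioo, integral_const_mul]
  rfl

end conv


lemma kernel_eq {ρ v : ℝ} (hv : 0 < v) :
    Real.exp (-v) * v ^ (ρ - 1) * mittagLeffler ρ ρ (v ^ ρ)
      = ∑' j : ℕ, gk (ρ * (j + 1)) v / Real.Gamma (ρ * (j + 1)) := by
  rw [mittagLeffler, ← tsum_mul_left]
  refine tsum_congr fun j => ?_
  have h1 : (v ^ ρ) ^ (j:ℕ) = v ^ (ρ * j) := by
    rw [← Real.rpow_natCast (v ^ ρ) j, ← Real.rpow_mul hv.le]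
  have h2 : v ^ (ρ * (j:ℝ) + ρ - 1) = v ^ (ρ - 1) * v ^ (ρ * j) := by
    rw [← Real.rpow_add hv]; congr 1; ring
  have h3 : ρ * (j:ℝ) + ρ = ρ * ((j:ℝ) + 1) := by ring
  rw [gk, h1, ← h3, h2]
  ring

section series
variable {ρ x : ℝ}

lemma integrableOn_gk_reflect {c x : ℝ} (hc : 0 < c) (hx : 0 < x) :
    IntegrableOn (fun u => gk c (x - u)) (Ioo 0 x) := by
  have h1 : IntervalIntegrable (gk c) volume 0 x := by
    rw [intervalIntegrable_iff_integrableOn_Ioc_of_le hx.le]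
    exact (integrableOn_gk hc).mono_set Ioc_subset_Ioi_self
  have h2 := (h1.comp_sub_left x).symm
  rw [sub_self, sub_zero] at h2
  rw [intervalIntegrable_iff_integrableOn_Ioc_of_le hx.le] at h2
  exact h2.mono_set Ioo_subset_Ioc_self

lemma integral_gk_reflect {c x : ℝ} (hx : 0 ≤ x) :
    ∫ u in Ioo (0:ℝ) x, gk c (x - u) = lg c x :=
  integral_Ioo_reflect (gk c) hx

/-- integrability of one term -/
lemma term_integrable (hρ : 0 < ρ) (hx : 0 < x) {c : ℝ} (hc : 0 < c) :
    IntegrableOn (fun u => gk c (x - u) * (1 - lg ρ u / Real.Gamma ρ)) (Ioo 0 x) := by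
  have hΓρ : 0 < Real.Gamma ρ := Real.Gamma_pos_of_pos hρ
  have h1 := integrableOn_gk_reflect hc hx
  have haesm : AEStronglyMeasurable (fun u => gk c (x - u) * (1 - lg ρ u / Real.Gamma ρ))
      (volume.restrict (Ioo 0 x)) := by
    refine AEStronglyMeasurable.mul ?_ ?_
    · exact ((continuousOn_gk c).comp (continuous_const.sub continuous_id).continuousOn
        (fun u hu => by simpa using sub_pos.mpr hu.2)).aestronglyMeasurable measurableSet_Ioo
    · exact (measurable_const.sub (((lg_mono hρ).measurable).div_const _)).aestronglyMeasurable
  refine Integrable.mono' (g := fun u => gk c (x - u) * 1) (h1.mul_const 1) haesm ?_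
  refine Filter.eventually_of_mem (self_mem_ae_restrict measurableSet_Ioo) fun u hu => ?_
  have hgk : 0 ≤ gk c (x - u) := gk_nonneg c (sub_pos.mpr hu.2).le
  have hw1 : 0 ≤ 1 - lg ρ u / Real.Gamma ρ := by
    rw [sub_nonneg, div_le_one hΓρ]
    exact lg_le_Gamma hρ u
  have hw2 : 1 - lg ρ u / Real.Gamma ρ ≤ 1 := by
    have := lg_nonneg ρ u
    have : 0 ≤ lg ρ u / Real.Gamma ρ := div_nonneg this hΓρ.le
    linarith
  rw [Real.norm_eq_abs, abs_of_nonneg (mul_nonneg hgk hw1)]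
  exact mul_le_mul_of_nonneg_left hw2 hgk

/-- value of one term -/
lemma term_eval (hρ : 0 < ρ) (hx : 0 < x) {c : ℝ} (hc : 0 < c) :
    ∫ u in Ioo (0:ℝ) x, gk c (x - u) / Real.Gamma c * (1 - lg ρ u / Real.Gamma ρ)
      = lg c x / Real.Gamma c - lg (c + ρ) x / Real.Gamma (c + ρ) := by
  have hΓρ : 0 < Real.Gamma ρ := Real.Gamma_pos_of_pos hρ
  have hΓc : 0 < Real.Gamma c := Real.Gamma_pos_of_pos hc
  have hΓcρ : 0 < Real.Gamma (c + ρ) := Real.Gamma_pos_of_pos (by linarith)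
  have h1 := integrableOn_gk_reflect hc hx
  have h2 : IntegrableOn (fun u => gk c (x - u) * lg ρ u) (Ioo 0 x) := by
    have haesm : AEStronglyMeasurable (fun u => gk c (x - u) * lg ρ u)
        (volume.restrict (Ioo 0 x)) := by
      refine AEStronglyMeasurable.mul ?_ ((lg_mono hρ).measurable).aestronglyMeasurable
      exact ((continuousOn_gk c).comp (continuous_const.sub continuous_id).continuousOn
        (fun u hu => by simpa using sub_pos.mpr hu.2)).aestronglyMeasurable measurableSet_Ioo
    refine Integrable.mono' (g := fun u => gk c (x - u) * Real.Gamma ρ) (h1.mul_const _) haesm ?_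
    refine Filter.eventually_of_mem (self_mem_ae_restrict measurableSet_Ioo) fun u hu => ?_
    have hgk : 0 ≤ gk c (x - u) := gk_nonneg c (sub_pos.mpr hu.2).le
    rw [Real.norm_eq_abs, abs_of_nonneg (mul_nonneg hgk (lg_nonneg _ _))]
    exact mul_le_mul_of_nonneg_left (lg_le_Gamma hρ u) hgk
  have key : ∫ u in Ioo (0:ℝ) x, (gk c (x - u) - gk c (x - u) * lg ρ u / Real.Gamma ρ)
      = lg c x - (Real.Gamma c / Real.Gamma (c + ρ)) * lg (c + ρ) x := by
    rw [integral_sub h1 (h2.div_const (Real.Gamma ρ))]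
    rw [integral_gk_reflect hx.le]
    have : ∫ u in Ioo (0:ℝ) x, gk c (x - u) * lg ρ u / Real.Gamma ρ
        = (∫ u in Ioo (0:ℝ) x, gk c (x - u) * lg ρ u) / Real.Gamma ρ := by
      rw [integral_div]
    rw [this, conv_lg hc hρ hx]
    field_simp
  calc ∫ u in Ioo (0:ℝ) x, gk c (x - u) / Real.Gamma c * (1 - lg ρ u / Real.Gamma ρ)
      = (∫ u in Ioo (0:ℝ) x, (gk c (x - u) - gk c (x - u) * lg ρ u / Real.Gamma ρ))
        / Real.Gamma c := by
        rw [← integral_div]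
        refine setIntegral_congr_fun measurableSet_Ioo fun u hu => ?_
        field_simp
    _ = lg c x / Real.Gamma c - lg (c + ρ) x / Real.Gamma (c + ρ) := by
        rw [key, sub_div]
        congr 1
        rw [div_mul_eq_mul_div, div_div, mul_comm (Real.Gamma (c+ρ)), ← div_div,
          mul_comm, mul_div_assoc, div_self hΓc.ne', mul_one]

lemma series_main (hρ : 0 < ρ) (hx : 0 < x) :
    ∫ u in Ioo (0:ℝ) x,
        (∑' j : ℕ, gk (ρ * (j + 1)) (x - u) / Real.Gamma (ρ * (j + 1)))
          * (1 - lg ρ u / Real.Gamma ρ)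
      = lg ρ x / Real.Gamma ρ := by
  have hΓρ : 0 < Real.Gamma ρ := Real.Gamma_pos_of_pos hρ
  set c : ℕ → ℝ := fun j => ρ * ((j:ℝ) + 1) with hcdef
  have hc : ∀ j, 0 < c j := fun j => mul_pos hρ (by positivity)
  set A : ℕ → ℝ := fun j => lg (c j) x / Real.Gamma (c j) with hAdef
  set F : ℕ → ℝ → ℝ :=
    fun j u => gk (c j) (x - u) / Real.Gamma (c j) * (1 - lg ρ u / Real.Gamma ρ) with hFdef
  have hcs : ∀ j, c j + ρ = c (j + 1) := by
    intro j
    simp only [hcdef]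
    push_cast
    ring
  have h_each : ∀ j, ∫ u in Ioo (0:ℝ) x, F j u = A j - A (j + 1) := by
    intro j
    have := term_eval hρ hx (hc j)
    rw [hcs j] at this
    exact this
  have h_int : ∀ j, IntegrableOn (F j) (Ioo 0 x) := by
    intro j
    have : F j = fun u => (gk (c j) (x - u) * (1 - lg ρ u / Real.Gamma ρ)) / Real.Gamma (c j) := by
      funext u; simp only [hFdef]; ring
    rw [this]
    exact (term_integrable hρ hx (hc j)).div_const _
  have h_nonneg_ae : ∀ j, 0 ≤ᵐ[volume.restrict (Ioo (0:ℝ) x)] F j := by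
    intro j
    refine Filter.eventually_of_mem (self_mem_ae_restrict measurableSet_Ioo) fun u hu => ?_
    have h1 : 0 ≤ gk (c j) (x - u) := gk_nonneg _ (sub_pos.mpr hu.2).le
    have h2 : 0 ≤ 1 - lg ρ u / Real.Gamma ρ := by
      rw [sub_nonneg, div_le_one hΓρ]; exact lg_le_Gamma hρ u
    exact mul_nonneg (div_nonneg h1 (Real.Gamma_pos_of_pos (hc j)).le) h2
  have h_t_nonneg : ∀ j, 0 ≤ ∫ u in Ioo (0:ℝ) x, F j u := by
    intro j
    exact integral_nonneg_of_ae (h_nonneg_ae j)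
  have h_A_nonneg : ∀ j, 0 ≤ A j := fun j =>
    div_nonneg (lg_nonneg _ _) (Real.Gamma_pos_of_pos (hc j)).le
  have h_diff_nonneg : ∀ j, 0 ≤ A j - A (j + 1) := fun j => (h_each j) ▸ h_t_nonneg j
  have h_A_tendsto : Filter.Tendsto A Filter.atTop (nhds 0) := by
    have hM : 0 < Real.exp 1 * x := mul_pos (Real.exp_pos 1) hx
    set C := Real.exp (2 * (Real.exp 1 * x)) / (Real.exp 1 * x) with hCdef
    have hbound : ∀ j, A j ≤ C * Real.exp (-(c j)) := fun j => lg_div_Gamma_le (hc j) hx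
    have hgeo : Filter.Tendsto (fun j : ℕ => C * Real.exp (-(c j))) Filter.atTop (nhds 0) := by
      have h1 : ∀ j : ℕ, Real.exp (-(c j)) = Real.exp (-ρ) ^ (j + 1) := by
        intro j
        rw [← Real.exp_nat_mul]
        congr 1
        simp only [hcdef]
        push_cast
        ring
      have h2 : Filter.Tendsto (fun j : ℕ => Real.exp (-ρ) ^ (j + 1)) Filter.atTop (nhds 0) := by
        have := (tendsto_pow_atTop_nhds_zero_of_lt_one (Real.exp_nonneg _)
          ((Real.exp_lt_one_iff (x := -ρ)).mpr (by linarith))).comp (Filter.tendsto_add_atTop_nat 1)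
        exact this
      simp only [h1]
      simpa using h2.const_mul C
    exact squeeze_zero h_A_nonneg hbound hgeo
  have h_summable : Summable (fun j => A j - A (j + 1)) := by
    refine summable_of_sum_range_le (c := A 0) h_diff_nonneg fun n => ?_
    rw [Finset.sum_range_sub' A n]
    linarith [h_A_nonneg n]
  have h_tsum : ∑' j, (A j - A (j + 1)) = A 0 := by
    have h1 := h_summable.hasSum.tendsto_sum_nat
    have h2 : Filter.Tendsto (fun n => ∑ i ∈ Finset.range n, (A i - A (i + 1)))
        Filter.atTop (nhds (A 0)) := by
      have := tendsto_const_nhds (x := A 0) (f := Filter.atTop (α := ℕ)) |>.sub h_A_tendsto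
      rw [sub_zero] at this
      refine this.congr fun n => ?_
      rw [Finset.sum_range_sub' A n]
    exact tendsto_nhds_unique h1 h2
  -- interchange sum and integral
  have h_swap : ∫ u in Ioo (0:ℝ) x, (∑' j, F j u) = ∑' j, ∫ u in Ioo (0:ℝ) x, F j u := by
    refine integral_tsum (fun j => ((h_int j).aestronglyMeasurable)) ?_
    have h1 : ∀ j, ∫⁻ u in Ioo (0:ℝ) x, ‖F j u‖ₑ = ENNReal.ofReal (A j - A (j + 1)) := by
      intro j
      rw [← h_each j, MeasureTheory.ofReal_integral_eq_lintegral_ofReal (h_int j) (h_nonneg_ae j)]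
      refine lintegral_congr_ae ?_
      refine (h_nonneg_ae j).mono fun u hu => ?_
      exact Real.enorm_eq_ofReal hu
    simp only [h1]
    rw [← ENNReal.ofReal_tsum_of_nonneg h_diff_nonneg h_summable]
    exact ENNReal.ofReal_ne_top
  have h_integrand : ∀ u : ℝ,
      (∑' j : ℕ, gk (ρ * (j + 1)) (x - u) / Real.Gamma (ρ * (j + 1)))
          * (1 - lg ρ u / Real.Gamma ρ) = ∑' j, F j u := by
    intro u
    exact (tsum_mul_right).symm
  calc ∫ u in Ioo (0:ℝ) x,
        (∑' j : ℕ, gk (ρ * (j + 1)) (x - u) / Real.Gamma (ρ * (j + 1)))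
          * (1 - lg ρ u / Real.Gamma ρ)
      = ∫ u in Ioo (0:ℝ) x, (∑' j, F j u) := by
        refine setIntegral_congr_fun measurableSet_Ioo fun u _ => h_integrand u
    _ = ∑' j, ∫ u in Ioo (0:ℝ) x, F j u := h_swap
    _ = ∑' j, (A j - A (j + 1)) := by
        refine tsum_congr fun j => h_each j
    _ = A 0 := h_tsum
    _ = lg ρ x / Real.Gamma ρ := by
        simp only [hAdef, hcdef]
        norm_num

end series

lemma main_x {ρ x : ℝ} (hρ : 0 < ρ) (hx : 0 < x) :
    uGamma ρ x / Real.Gamma ρ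
      = 1 - ∫ u in Ioo (0:ℝ) x,
          Real.exp (-(x - u)) * (x - u) ^ (ρ - 1) * mittagLeffler ρ ρ ((x - u) ^ ρ)
            * (uGamma ρ u / Real.Gamma ρ) := by
  have hΓρ : 0 < Real.Gamma ρ := Real.Gamma_pos_of_pos hρ
  have hcongr : ∫ u in Ioo (0:ℝ) x,
      Real.exp (-(x - u)) * (x - u) ^ (ρ - 1) * mittagLeffler ρ ρ ((x - u) ^ ρ)
        * (uGamma ρ u / Real.Gamma ρ)
      = ∫ u in Ioo (0:ℝ) x,
        (∑' j : ℕ, gk (ρ * (j + 1)) (x - u) / Real.Gamma (ρ * (j + 1)))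
          * (1 - lg ρ u / Real.Gamma ρ) := by
    refine setIntegral_congr_fun measurableSet_Ioo fun u hu => ?_
    rw [kernel_eq (sub_pos.mpr hu.2), uGamma_eq hρ hu.1.le, sub_div, div_self hΓρ.ne']
  rw [hcongr, series_main hρ hx, uGamma_eq hρ hx.le, sub_div, div_self hΓρ.ne']

theorem stmt_18 (ρ α ξ : ℝ) (hρ : ρ ∈ Set.Ioc (0 : ℝ) 1) (hα : α ∈ Set.Ioc (0 : ℝ) 1)
    (hξ : ξ ≠ 0) :
    ∀ t ≥ (0 : ℝ),
      uGamma ρ ((ξ ^ 2 / 2) * t ^ α) / Real.Gamma ρ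
        = 1 - α * (ξ ^ 2 / 2) * ∫ s in Set.Ioo (0 : ℝ) t,
            Real.exp (-((ξ ^ 2 / 2) * (t ^ α - s ^ α)))
              * ((ξ ^ 2 / 2) * (t ^ α - s ^ α)) ^ (ρ - 1)
              * mittagLeffler ρ ρ (((ξ ^ 2 / 2) * (t ^ α - s ^ α)) ^ ρ)
              * s ^ (α - 1)
              * (uGamma ρ ((ξ ^ 2 / 2) * s ^ α) / Real.Gamma ρ) := by
  intro t ht
  set A : ℝ := ξ ^ 2 / 2 with hAdef
  have hA : 0 < A := by
    have : ξ ^ 2 > 0 := by positivity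
    linarith
  have hρ0 := hρ.1
  have hα0 := hα.1
  have hΓρ : 0 < Real.Gamma ρ := Real.Gamma_pos_of_pos hρ0
  rcases eq_or_lt_of_le ht with rfl | ht0
  · -- t = 0
    rw [Ioo_self, Measure.restrict_empty, integral_zero_measure]
    rw [Real.zero_rpow hα0.ne', mul_zero]
    have : uGamma ρ 0 = Real.Gamma ρ := by
      rw [Real.Gamma_eq_integral hρ0]; rfl
    rw [this, div_self hΓρ.ne']
    ring
  · -- t > 0
    set x : ℝ := A * t ^ α with hxdef
    have hx : 0 < x := mul_pos hA (Real.rpow_pos_of_pos ht0 α)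
    set g : ℝ → ℝ := fun u =>
      Real.exp (-(x - u)) * (x - u) ^ (ρ - 1) * mittagLeffler ρ ρ ((x - u) ^ ρ)
        * (uGamma ρ u / Real.Gamma ρ) with hgdef
    have hmain := main_x hρ0 hx
    -- change of variables
    have himage : (fun s : ℝ => A * s ^ α) '' Ioo 0 t = Ioo 0 x := by
      ext u
      constructor
      · rintro ⟨s, hs, rfl⟩
        exact ⟨mul_pos hA (Real.rpow_pos_of_pos hs.1 α),
          mul_lt_mul_of_pos_left (Real.rpow_lt_rpow hs.1.le hs.2 hα0) hA⟩
      · rintro ⟨hu0, hu1⟩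
        refine ⟨(u / A) ^ α⁻¹, ⟨Real.rpow_pos_of_pos (div_pos hu0 hA) _, ?_⟩, ?_⟩
        · have h1 : u / A < t ^ α := (div_lt_iff₀ hA).mpr (by rw [hxdef] at hu1; linarith [hu1])
          calc (u / A) ^ α⁻¹ < (t ^ α) ^ α⁻¹ :=
                Real.rpow_lt_rpow (div_nonneg hu0.le hA.le) h1 (by positivity)
            _ = t := Real.rpow_rpow_inv ht0.le hα0.ne'
        · show A * ((u / A) ^ α⁻¹) ^ α = u
          rw [Real.rpow_inv_rpow (div_nonneg hu0.le hA.le) hα0.ne']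
          field_simp
    have hderiv : ∀ s ∈ Ioo (0:ℝ) t,
        HasDerivWithinAt (fun s : ℝ => A * s ^ α) (A * (α * s ^ (α - 1))) (Ioo 0 t) s := by
      intro s hs
      exact ((Real.hasDerivAt_rpow_const (Or.inl hs.1.ne')).const_mul A).hasDerivWithinAt
    have hinj : InjOn (fun s : ℝ => A * s ^ α) (Ioo 0 t) := by
      have hsm : StrictMonoOn (fun s : ℝ => A * s ^ α) (Ioo 0 t) := by
        intro s1 h1 s2 h2 h12
        exact mul_lt_mul_of_pos_left (Real.rpow_lt_rpow h1.1.le h12 hα0) hA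
      exact hsm.injOn
    have hsub := integral_image_eq_integral_abs_deriv_smul measurableSet_Ioo hderiv hinj g
    rw [himage] at hsub
    rw [hgdef] at hsub
    rw [hmain, hsub]
    congr 1
    rw [← MeasureTheory.integral_const_mul]
    refine (setIntegral_congr_fun measurableSet_Ioo fun s hs => ?_)
    have harg : x - A * s ^ α = A * (t ^ α - s ^ α) := by rw [hxdef]; ring
    have habs : |A * (α * s ^ (α - 1))| = A * (α * s ^ (α - 1)) := by
      refine abs_of_nonneg ?_
      have := Real.rpow_nonneg hs.1.le (α - 1)
      positivity
    simp only [smul_eq_mul, habs, harg]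
    ring
end
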